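/- Let d ≥ 2 be an integer. If the Laurent series f_d is badly approximable, then all partial quotients of h_d and of u_d are linear; that is, there exist no coprime polynomials p, q ∈ ℚ[x], q ≠ 0, with ‖h_d − p/q‖ ≤ −2‖q‖ − 2, and no coprime polynomials p, q ∈ ℚ[x], q ≠ 0, with ‖u_d − p/q‖ ≤ −2‖q‖ − 2. -/

import Mathlib

open Polynomial

noncomputable section

/-- The coefficient of `x^{-n}` in the generalized Thue–Morse series `f_d`:
`(-1)^s` if every base-`d` digit of `n` is `0` or `1` and exactly `s` digits equal `1`,
and `0` otherwise. -/
def tmCoeff (d n : ℕ) : ℚ :=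
  if (Nat.digits d n).all (· ≤ 1) then (-1 : ℚ) ^ (Nat.digits d n).sum else 0

/-- We represent the field `ℚ((x⁻¹))` of formal Laurent series in `x⁻¹` as
`LaurentSeries ℚ` in the variable `y = x⁻¹`; the coefficient of `y^n` is the
coefficient of `x^{-n}`.  `fd d` is the generalized Thue–Morse function `f_d`. -/
def fd (d : ℕ) : LaurentSeries ℚ :=
  HahnSeries.ofPowerSeries ℤ ℚ (PowerSeries.mk fun n => tmCoeff d n)

/-- The element `x` of `ℚ((x⁻¹))`, i.e. `y⁻¹`. -/
def xL : LaurentSeries ℚ := HahnSeries.single (-1 : ℤ) 1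

/-- Substitution `x ↦ x^d` on `ℚ((x⁻¹))` (i.e. `y ↦ y^d`). -/
def substPow (d : ℕ) (u : LaurentSeries ℚ) : LaurentSeries ℚ :=
  if h : 0 < d then
    HahnSeries.embDomain
      (OrderEmbedding.ofStrictMono (fun n : ℤ => (d : ℤ) * n)
        (fun a b hab => mul_lt_mul_of_pos_left hab (by exact_mod_cast h))) u
  else 0

/-- The degree `‖u‖` of a Laurent series `u ∈ ℚ((x⁻¹))`: the largest exponent of `x`
with nonzero coefficient, i.e. minus the order in `y = x⁻¹`. -/
def ldeg (u : LaurentSeries ℚ) : ℤ := -u.order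

/-- The embedding of `ℚ[x]` into `ℚ((x⁻¹))`, sending the polynomial variable to `x`. -/
def polyToLS (p : ℚ[X]) : LaurentSeries ℚ := Polynomial.aeval xL p

/-- `u ∈ ℚ((x⁻¹))` is well approximable if for every integer `C` there are polynomials
`p, q`, `q ≠ 0`, with `‖u - p/q‖ < -2‖q‖ - C`. -/
def wellApprox (u : LaurentSeries ℚ) : Prop :=
  ∀ C : ℤ, ∃ p q : ℚ[X], q ≠ 0 ∧
    ldeg (u - polyToLS p / polyToLS q) < -2 * (q.natDegree : ℤ) - C

/-- `g_d(x) = x^{-d+1} f_d(x)`. -/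
def gd (d : ℕ) : LaurentSeries ℚ := HahnSeries.single ((d : ℤ) - 1) 1 * fd d

/-- `h_d(x) = x^{-1} f_d(x)`. -/
def hd (d : ℕ) : LaurentSeries ℚ := HahnSeries.single (1 : ℤ) 1 * fd d

/-- `u_d(x) = (1 - x^{-1}) f_d(x)`. -/
def ud (d : ℕ) : LaurentSeries ℚ := (1 - HahnSeries.single (1 : ℤ) 1) * fd d

/-- The polynomial `1 + x + ⋯ + x^{d-1}`. -/
def sumPow (d : ℕ) : ℚ[X] := ∑ i ∈ Finset.range d, X ^ i

/-- The real number `f_d(a) = ∏_{t=0}^∞ (1 - a^{-d^t})`. -/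
def fdReal (a d : ℕ) : ℝ := ∏' t : ℕ, (1 - (a : ℝ) ^ (-(d ^ t : ℤ)))

/-- A real number `ξ` is badly approximable if there is `c > 0` with
`|ξ - P/Q| ≥ c/Q²` for all integers `P, Q` with `Q ≥ 1`. -/
def badApproxReal (ξ : ℝ) : Prop :=
  ∃ c : ℝ, 0 < c ∧ ∀ P Q : ℤ, 1 ≤ Q → c / (Q : ℝ) ^ 2 ≤ |ξ - (P : ℝ) / Q|

/-! The functional equation `x f_d(x) = (x - 1) f_d(x^d)` turns a rational approximation `p / q`
of `f_d` with `‖f_d - p/q‖ + 2‖q‖ ≤ a` into one with `‖f_d - p'/q'‖ + 2‖q'‖ ≤ d a + 2`, which is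
smaller than `a` once `a ≤ -3`; iterating, a single approximation of `f_d` with `a = -3` already
makes `f_d` well approximable. A nonlinear partial quotient of `h_d` or `u_d` is an approximation
with `a = -2`, and the identities
`f_d(x) = (x - 1)(x^d - 1) x^{d²-d-1} h_d(x^{d²})` and
`(1 + x^d + ⋯ + x^{d(d-1)}) f_d(x) = (x - 1) x^{d²-d-1} u_d(x^{d²})`
transport it to an approximation of `f_d` with `a = -d²`, respectively `a = -2d`. -/

variable {d : ℕ}

section

open HahnSeries

theorem ldeg_mul {u v : LaurentSeries ℚ} (hu : u ≠ 0) (hv : v ≠ 0) :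
    ldeg (u * v) = ldeg u + ldeg v := by
  rw [ldeg, ldeg, ldeg, order_mul hu hv, neg_add]

theorem ldeg_div {u v : LaurentSeries ℚ} (hu : u ≠ 0) (hv : v ≠ 0) :
    ldeg (u / v) = ldeg u - ldeg v := by
  rw [eq_sub_iff_add_eq, ← ldeg_mul (div_ne_zero hu hv) hv, div_mul_cancel₀ u hv]

theorem xL_mul_single_one : xL * single 1 1 = 1 := by
  rw [xL, single_mul_single, mul_one, neg_add_cancel, ← C_apply, map_one]

theorem xL_ne_zero : xL ≠ 0 :=
  single_ne_zero one_ne_zero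

theorem polyToLS_C_mul_X_pow (a : ℚ) (n : ℕ) :
    polyToLS (C a * X ^ n) = single (-n : ℤ) a := by
  rw [polyToLS, map_mul, aeval_C, map_pow, aeval_X, xL, single_pow, one_pow,
    LaurentSeries.algebraMap_apply, C_apply, single_mul_single, mul_one]
  simp

theorem orderTop_polyToLS {q : ℚ[X]} (hq : q ≠ 0) :
    (polyToLS q).orderTop = (-q.natDegree : ℤ) := by
  induction hn : q.natDegree using Nat.strong_induction_on generalizing q with
  | _ n ih =>
  have hlead : (single (-n : ℤ) q.leadingCoeff).orderTop = (-n : ℤ) :=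
    orderTop_single (leadingCoeff_ne_zero.2 hq)
  rw [← q.eraseLead_add_C_mul_X_pow, polyToLS, map_add, ← polyToLS, ← polyToLS,
    polyToLS_C_mul_X_pow, hn]
  by_cases he : q.eraseLead = 0
  · rwa [he, polyToLS, map_zero, zero_add]
  have hlt : q.eraseLead.natDegree < n :=
    hn ▸ (q.eraseLead_natDegree_lt_or_eraseLead_eq_zero.resolve_right he)
  have hlow : (single (-n : ℤ) q.leadingCoeff).orderTop < (polyToLS q.eraseLead).orderTop := by
    rw [hlead, ih _ hlt he rfl]
    exact_mod_cast neg_lt_neg (Int.ofNat_lt.2 hlt)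
  rw [orderTop_add_eq_right hlow, hlead]

theorem polyToLS_ne_zero {q : ℚ[X]} (hq : q ≠ 0) : polyToLS q ≠ 0 :=
  orderTop_ne_top.1 (by simp [orderTop_polyToLS hq])

theorem ldeg_polyToLS {q : ℚ[X]} (hq : q ≠ 0) : ldeg (polyToLS q) = q.natDegree := by
  have h := orderTop_polyToLS hq
  rw [← order_eq_orderTop_of_ne_zero (polyToLS_ne_zero hq), WithTop.coe_inj] at h
  rw [ldeg, h, neg_neg]

def substPowAlgHom (d : ℕ) (hd0 : 0 < d) : LaurentSeries ℚ →ₐ[ℚ] LaurentSeries ℚ :=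
  (embDomainRingHom (AddMonoidHom.mulLeft (d : ℤ)) (mul_right_injective₀ (by positivity))
    (fun _ _ => mul_le_mul_iff_right₀ (by positivity))).toRatAlgHom

theorem substPow_eq (hd0 : 0 < d) (u : LaurentSeries ℚ) :
    substPow d u = substPowAlgHom d hd0 u := by
  rw [substPow, dif_pos hd0]
  rfl

theorem substPow_mul (hd0 : 0 < d) (u v : LaurentSeries ℚ) :
    substPow d (u * v) = substPow d u * substPow d v := by
  simp only [substPow_eq hd0, map_mul]

theorem substPow_xL (hd0 : 0 < d) : substPow d xL = xL ^ d := by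
  rw [substPow, dif_pos hd0, xL, embDomain_single, single_pow, one_pow]
  simp [mul_comm]

theorem substPow_polyToLS (hd0 : 0 < d) (p : ℚ[X]) :
    substPow d (polyToLS p) = polyToLS (expand ℚ d p) := by
  rw [polyToLS, polyToLS, expand_aeval, ← substPow_xL hd0, substPow_eq hd0, substPow_eq hd0,
    aeval_algHom_apply]

theorem coeff_substPow_mul (hd0 : 0 < d) (u : LaurentSeries ℚ) (k : ℤ) :
    (substPow d u).coeff (d * k) = u.coeff k := by
  rw [substPow, dif_pos hd0]
  exact embDomain_coeff

theorem coeff_substPow_of_not_dvd (u : LaurentSeries ℚ) {n : ℤ} (hn : ¬ (d : ℤ) ∣ n) :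
    (substPow d u).coeff n = 0 := by
  rw [substPow]
  split_ifs
  · exact embDomain_of_notMem_range fun ⟨k, hk⟩ => hn ⟨k, hk.symm⟩
  · rfl

theorem coeff_substPow_mul_add (hd0 : 0 < d) (u : LaurentSeries ℚ) (j : ℤ) {s : ℕ}
    (hs : s < d) : (substPow d u).coeff (d * j + s) = if s = 0 then u.coeff j else 0 := by
  split_ifs with h0
  · rw [h0, Nat.cast_zero, add_zero, coeff_substPow_mul hd0]
  · refine coeff_substPow_of_not_dvd u fun hdvd => ?_
    have := Int.le_of_dvd (by omega) ((Int.dvd_add_right (dvd_mul_right _ _)).1 hdvd)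
    omega

theorem orderTop_substPow (hd0 : 0 < d) (u : LaurentSeries ℚ) :
    (substPow d u).orderTop = u.orderTop.map ((d : ℤ) * ·) := by
  rw [substPow, dif_pos hd0, orderTop_embDomain]
  rfl

theorem substPow_ne_zero (hd0 : 0 < d) {u : LaurentSeries ℚ} (hu : u ≠ 0) : substPow d u ≠ 0 := by
  rw [← orderTop_ne_top, orderTop_substPow hd0, orderTop_of_ne_zero hu]
  exact WithTop.coe_ne_top

theorem ldeg_substPow (hd0 : 0 < d) {u : LaurentSeries ℚ} (hu : u ≠ 0) :
    ldeg (substPow d u) = d * ldeg u := by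
  have h := orderTop_substPow hd0 u
  rw [← order_eq_orderTop_of_ne_zero (substPow_ne_zero hd0 hu), ← order_eq_orderTop_of_ne_zero hu,
    WithTop.map_coe, WithTop.coe_inj] at h
  rw [ldeg, ldeg, h, mul_neg]

theorem tmCoeff_mul_add (hd2 : 2 ≤ d) {r : ℕ} (hr : r < d) (k : ℕ) :
    tmCoeff d (d * k + r) = tmCoeff d r * tmCoeff d k := by
  rcases Nat.eq_zero_or_pos k with rfl | hk
  · simp [tmCoeff]
  unfold tmCoeff
  rw [add_comm, Nat.digits_add d (by omega) r k hr (Or.inr hk.ne')]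
  rcases Nat.lt_trichotomy r 1 with h | rfl | h
  · obtain rfl : r = 0 := by omega
    simp
  · by_cases hk1 : (Nat.digits d k).all (· ≤ 1) <;>
      simp [hk1, _root_.pow_add, Nat.digits_of_lt d 1 one_ne_zero hr]
  · simp [Nat.digits_of_lt d r (by omega) hr, show ¬ r ≤ 1 by omega]

theorem coeff_fd_natCast (d n : ℕ) : (fd d).coeff n = tmCoeff d n := by
  rw [fd, ofPowerSeries_apply_coeff, PowerSeries.coeff_mk]

theorem coeff_fd_of_neg (d : ℕ) {n : ℤ} (hn : n < 0) : (fd d).coeff n = 0 := by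
  rw [fd, ofPowerSeries_apply]
  exact embDomain_of_notMem_range fun ⟨m, hm⟩ => by simp at hm; omega

theorem coeff_fd_mul_add (hd2 : 2 ≤ d) {r : ℕ} (hr : r < d) (k : ℤ) :
    (fd d).coeff (d * k + r) = tmCoeff d r * (fd d).coeff k := by
  rcases lt_or_ge k 0 with hk | hk
  · rw [coeff_fd_of_neg d hk, coeff_fd_of_neg d (by nlinarith), mul_zero]
  · lift k to ℕ using hk
    rw [show (d * k + r : ℤ) = (d * k + r : ℕ) by push_cast; rfl, coeff_fd_natCast,
      coeff_fd_natCast, tmCoeff_mul_add hd2 hr]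

theorem fd_eq_one_sub_mul_substPow (hd2 : 2 ≤ d) :
    fd d = (1 - single 1 1) * substPow d (fd d) := by
  have hd0 : (0 : ℤ) < d := by omega
  ext n
  obtain ⟨k, r, hr, rfl⟩ : ∃ (k : ℤ) (r : ℕ), r < d ∧ n = d * k + r :=
    ⟨n / d, (n % d).toNat, by have := Int.emod_lt_of_pos n hd0; omega,
      by have := Int.emod_nonneg n hd0.ne'; have := Int.emod_add_mul_ediv n d; omega⟩
  have hS {j : ℤ} {s : ℕ} (hs : s < d) := coeff_substPow_mul_add (by omega) (fd d) j hs
  have hsub : ((1 - single 1 1) * substPow d (fd d)).coeff (d * k + r) =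
      (substPow d (fd d)).coeff (d * k + r) - (substPow d (fd d)).coeff (d * k + r - 1) := by
    rw [sub_mul, one_mul, HahnSeries.coeff_sub, coeff_single_mul, one_mul]
  rw [hsub, coeff_fd_mul_add hd2 hr, hS hr]
  rcases Nat.lt_trichotomy r 1 with h | rfl | h
  · obtain rfl : r = 0 := by omega
    rw [show (d * k + (0 : ℕ) - 1 : ℤ) = d * (k - 1) + (d - 1 : ℕ) by
        push_cast [Nat.cast_sub (by omega : 1 ≤ d)]; ring,
      hS (by omega)]
    simp [tmCoeff, show d - 1 ≠ 0 by omega]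
  · rw [show (d * k + (1 : ℕ) - 1 : ℤ) = d * k + (0 : ℕ) by push_cast; ring, hS (by omega)]
    simp [tmCoeff, Nat.digits_of_lt d 1 one_ne_zero (by omega)]
  · rw [show (d * k + r - 1 : ℤ) = d * k + (r - 1 : ℕ) by push_cast [h.le]; ring,
      hS (by omega)]
    simp [tmCoeff, Nat.digits_of_lt d r (by omega) hr, show ¬ r ≤ 1 by omega,
      show r ≠ 0 by omega, show r - 1 ≠ 0 by omega]

end

/-- The case `u = p / q` is excluded since there `ldeg` takes the junk value `0`. -/
def HasApprox (u : LaurentSeries ℚ) (a : ℤ) : Prop :=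
  ∃ p q : ℚ[X], q ≠ 0 ∧ u - polyToLS p / polyToLS q ≠ 0 ∧
    ldeg (u - polyToLS p / polyToLS q) + 2 * q.natDegree ≤ a

namespace HasApprox

variable {u w : LaurentSeries ℚ} {a b : ℤ}

theorem mono (h : HasApprox u a) (hab : a ≤ b) : HasApprox u b :=
  let ⟨p, q, hq, hne, hle⟩ := h
  ⟨p, q, hq, hne, hle.trans hab⟩

theorem substPow (hd0 : 0 < d) (h : HasApprox u a) : HasApprox (substPow d u) (d * a) := by
  obtain ⟨p, q, hq, hne, hle⟩ := h
  have herr : _root_.substPow d u - polyToLS (expand ℚ d p) / polyToLS (expand ℚ d q) =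
      _root_.substPow d (u - polyToLS p / polyToLS q) := by
    simp only [← substPow_polyToLS hd0, substPow_eq hd0, map_sub, map_div₀]
  refine ⟨expand ℚ d p, expand ℚ d q, (expand_ne_zero hd0).2 hq, ?_, ?_⟩
  · rw [herr]
    exact substPow_ne_zero hd0 hne
  · rw [herr, ldeg_substPow hd0 hne, natDegree_expand]
    push_cast
    nlinarith

theorem of_mul_eq {A B : ℚ[X]} (hA : A ≠ 0) (hB : B ≠ 0)
    (hwu : polyToLS B * w = polyToLS A * u) (h : HasApprox u a) :
    HasApprox w (a + A.natDegree + B.natDegree) := by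
  obtain ⟨p, q, hq, hne, hle⟩ := h
  have hA' := polyToLS_ne_zero hA
  have hB' := polyToLS_ne_zero hB
  have hq' := polyToLS_ne_zero hq
  have hAB := div_ne_zero hA' hB'
  have herr : w - polyToLS (A * p) / polyToLS (B * q) =
      polyToLS A / polyToLS B * (u - polyToLS p / polyToLS q) := by
    simp only [polyToLS, map_mul] at hwu hB' hq' ⊢
    field_simp
    linear_combination (aeval xL q) * hwu
  refine ⟨A * p, B * q, mul_ne_zero hB hq, ?_, ?_⟩
  · rw [herr]
    exact mul_ne_zero hAB hne
  · rw [herr, ldeg_mul hAB hne, ldeg_div hA' hB', ldeg_polyToLS hA, ldeg_polyToLS hB,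
      natDegree_mul hB hq]
    push_cast
    linarith

theorem of_eq_mul {A : ℚ[X]} (hA : A ≠ 0) (hwu : w = polyToLS A * u) (h : HasApprox u a) :
    HasApprox w (a + A.natDegree) := by
  simpa using h.of_mul_eq hA one_ne_zero (by rw [polyToLS, map_one, one_mul, hwu])

end HasApprox

theorem hasApprox_of_ldeg_sub_le {u : LaurentSeries ℚ} {p q : ℚ[X]} (hq : q ≠ 0)
    (h : ldeg (u - polyToLS p / polyToLS q) ≤ -2 * q.natDegree - 2) : HasApprox u (-2) := by
  refine ⟨p, q, hq, fun h0 => ?_, by linarith⟩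
  rw [h0, ldeg, HahnSeries.order_zero] at h
  omega

theorem wellApprox_of_forall_hasApprox {u : LaurentSeries ℚ} (h : ∀ a, HasApprox u a) :
    wellApprox u := by
  intro C
  obtain ⟨p, q, hq, -, hle⟩ := h (-C - 1)
  exact ⟨p, q, hq, by linarith⟩

theorem polyToLS_X_mul_fd (hd2 : 2 ≤ d) :
    polyToLS X * fd d = polyToLS (X - C 1) * substPow d (fd d) := by
  conv_lhs => rw [fd_eq_one_sub_mul_substPow hd2]
  simp only [polyToLS, map_sub, aeval_X, map_one]
  rw [← mul_assoc, mul_sub, mul_one, xL_mul_single_one]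

theorem polyToLS_X_mul_hd (d : ℕ) : polyToLS X * hd d = fd d := by
  simp only [hd, polyToLS, aeval_X, ← mul_assoc, xL_mul_single_one, one_mul]

theorem polyToLS_X_mul_ud (d : ℕ) : polyToLS X * ud d = polyToLS (X - C 1) * fd d := by
  simp only [ud, polyToLS, map_sub, aeval_X, map_one, ← mul_assoc, mul_sub, mul_one,
    xL_mul_single_one]

theorem polyToLS_X_pow_mul_fd (hd2 : 2 ≤ d) :
    polyToLS (X ^ (d + 1)) * fd d =
      polyToLS ((X - C 1) * (X ^ d - C 1)) * substPow d (substPow d (fd d)) := by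
  have h1 := polyToLS_X_mul_fd hd2
  have h2 := congrArg (substPow d) h1
  simp only [substPow_mul (by omega : 0 < d), substPow_polyToLS (by omega : 0 < d)] at h2
  simp only [polyToLS, map_mul, map_sub, map_pow, expand_X, aeval_X, map_one] at h1 h2 ⊢
  linear_combination xL ^ d * h1 + (xL - 1) * h2

theorem xL_pow_mul_self_eq (hd2 : 2 ≤ d) :
    xL ^ (d * d) = xL ^ (d * d - d - 1) * xL ^ (d + 1) := by
  rw [← _root_.pow_add]
  congr 1
  have : d + 1 ≤ d * d := by nlinarith
  omega

theorem fd_eq_polyToLS_mul_substPow_substPow_hd (hd2 : 2 ≤ d) :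
    fd d = polyToLS ((X - C 1) * (X ^ d - C 1) * X ^ (d * d - d - 1)) *
      substPow d (substPow d (hd d)) := by
  have hf := polyToLS_X_pow_mul_fd hd2
  have hh := congrArg (fun v => substPow d (substPow d v)) (polyToLS_X_mul_hd d)
  simp only [substPow_mul (by omega : 0 < d), substPow_polyToLS (by omega : 0 < d)] at hh
  simp only [polyToLS, map_mul, map_sub, map_pow, expand_X, aeval_X, map_one] at hf hh ⊢
  refine mul_left_cancel₀ (pow_ne_zero (d + 1) xL_ne_zero) ?_
  linear_combination hf - (xL - 1) * (xL ^ d - 1) * hh +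
    (xL - 1) * (xL ^ d - 1) * substPow d (substPow d (hd d)) * xL_pow_mul_self_eq hd2

theorem sumPow_mul_X_sub_C_one (d : ℕ) : sumPow d * (X - C 1) = X ^ d - C 1 := by
  rw [sumPow, map_one, geom_sum_mul]

theorem polyToLS_expand_sumPow_mul_fd (hd2 : 2 ≤ d) :
    polyToLS (expand ℚ d (sumPow d)) * fd d = polyToLS ((X - C 1) * X ^ (d * d - d - 1)) *
      substPow d (substPow d (ud d)) := by
  have hf := polyToLS_X_pow_mul_fd hd2
  have hu := congrArg (fun v => substPow d (substPow d v)) (polyToLS_X_mul_ud d)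
  simp only [substPow_mul (by omega : 0 < d), substPow_polyToLS (by omega : 0 < d)] at hu
  have hgeo := congrArg (fun p => polyToLS (expand ℚ d p)) (sumPow_mul_X_sub_C_one d)
  have hne := polyToLS_ne_zero (X_pow_sub_C_ne_zero (by omega : 0 < d) (1 : ℚ))
  simp only [polyToLS, map_mul, map_sub, map_pow, expand_X, aeval_X, map_one]
    at hf hu hgeo hne ⊢
  refine mul_left_cancel₀ (mul_ne_zero hne (pow_ne_zero (d + 1) xL_ne_zero)) ?_
  linear_combination xL ^ (d + 1) * fd d * hgeo + ((xL ^ d) ^ d - 1) * hf -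
    (xL - 1) * (xL ^ d - 1) * hu +
    (xL - 1) * (xL ^ d - 1) * substPow d (substPow d (ud d)) * xL_pow_mul_self_eq hd2

theorem isMonicOfDegree_X_pow_sub_C {R : Type*} [Ring R] [Nontrivial R] (r : R) (hd0 : 0 < d) :
    IsMonicOfDegree (X ^ d - C r) d :=
  (isMonicOfDegree_X_pow R d).sub (by rw [natDegree_C]; exact hd0)

theorem isMonicOfDegree_expand_sumPow (hd0 : 0 < d) :
    IsMonicOfDegree (expand ℚ d (sumPow d)) ((d - 1) * d) := by
  have h : IsMonicOfDegree (sumPow d) (d - 1) :=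
    (isMonicOfDegree_X_sub_one 1).of_mul_right <| by
      rw [sumPow_mul_X_sub_C_one, Nat.sub_add_cancel hd0]
      exact isMonicOfDegree_X_pow_sub_C 1 hd0
  rw [expand_eq_comp_X_pow]
  exact h.comp hd0.ne' (isMonicOfDegree_X_pow ℚ d)

namespace HasApprox

variable {a : ℤ}

theorem fd_sub_one (hd2 : 2 ≤ d) (h : HasApprox (fd d) a) (ha : a ≤ -3) :
    HasApprox (fd d) (a - 1) := by
  have h' := (h.substPow (by omega)).of_mul_eq (X_sub_C_ne_zero 1) X_ne_zero
    (polyToLS_X_mul_fd hd2)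
  rw [natDegree_X_sub_C, natDegree_X] at h'
  have hda : (d : ℤ) * a ≤ 2 * a := mul_le_mul_of_nonpos_right (by exact_mod_cast hd2) (by omega)
  exact h'.mono (by push_cast; linarith)

theorem fd_of_hd (hd2 : 2 ≤ d) (h : HasApprox (hd d) (-2)) : HasApprox (fd d) (-3) := by
  have hA := ((isMonicOfDegree_X_sub_one (1 : ℚ)).mul
    (isMonicOfDegree_X_pow_sub_C 1 (by omega : 0 < d))).mul
    (isMonicOfDegree_X_pow ℚ (d * d - d - 1))
  have h' := ((h.substPow (by omega)).substPow (by omega)).of_eq_mul hA.ne_zero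
    (fd_eq_polyToLS_mul_substPow_substPow_hd hd2)
  rw [hA.natDegree_eq] at h'
  refine h'.mono ?_
  have : d + 1 ≤ d * d := by nlinarith
  have hm : ((d * d - d - 1 : ℕ) : ℤ) = d * d - d - 1 := by omega
  push_cast [hm]
  nlinarith

theorem fd_of_ud (hd2 : 2 ≤ d) (h : HasApprox (ud d) (-2)) : HasApprox (fd d) (-3) := by
  have hA := (isMonicOfDegree_X_sub_one (1 : ℚ)).mul (isMonicOfDegree_X_pow ℚ (d * d - d - 1))
  have hB := isMonicOfDegree_expand_sumPow (by omega : 0 < d)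
  have h' := ((h.substPow (by omega)).substPow (by omega)).of_mul_eq hA.ne_zero hB.ne_zero
    (polyToLS_expand_sumPow_mul_fd hd2)
  rw [hA.natDegree_eq, hB.natDegree_eq] at h'
  refine h'.mono ?_
  have : d + 1 ≤ d * d := by nlinarith
  have hm : ((d * d - d - 1 : ℕ) : ℤ) = d * d - d - 1 := by omega
  push_cast [hm, Nat.cast_sub (by omega : 1 ≤ d)]
  nlinarith

end HasApprox

theorem wellApprox_fd_of_hasApprox (hd2 : 2 ≤ d) (h : HasApprox (fd d) (-3)) :
    wellApprox (fd d) := by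
  have hn : ∀ n : ℕ, HasApprox (fd d) (-3 - n) := by
    intro n
    induction n with
    | zero => simpa using h
    | succ n ih => simpa [sub_add_eq_sub_sub] using ih.fd_sub_one hd2 (by omega)
  exact wellApprox_of_forall_hasApprox fun a => (hn (-3 - a).toNat).mono (by omega)

/-- Lemma 5: if `f_d` is badly approximable then all partial quotients of
`h_d` and of `u_d` are linear. -/
theorem partial_quotients_linear (d : ℕ) (hd2 : 2 ≤ d) (hbad : ¬ wellApprox (fd d)) :
    (¬ ∃ p q : ℚ[X], IsCoprime p q ∧ q ≠ 0 ∧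
        ldeg (hd d - polyToLS p / polyToLS q) ≤ -2 * (q.natDegree : ℤ) - 2) ∧
    (¬ ∃ p q : ℚ[X], IsCoprime p q ∧ q ≠ 0 ∧
        ldeg (ud d - polyToLS p / polyToLS q) ≤ -2 * (q.natDegree : ℤ) - 2) := by
  constructor
  · rintro ⟨p, q, -, hq, hle⟩
    exact hbad (wellApprox_fd_of_hasApprox hd2 ((hasApprox_of_ldeg_sub_le hq hle).fd_of_hd hd2))
  · rintro ⟨p, q, -, hq, hle⟩
    exact hbad (wellApprox_fd_of_hasApprox hd2 ((hasApprox_of_ldeg_sub_le hq hle).fd_of_ud hd2))
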